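/- arXiv:1705.09018 — 3 statements merged into one kernel-verified Lean document; each statement's English description precedes it below -/
import Mathlib

section
/- For all nonnegative real numbers p and q, one has (1 - min(p,q)/√(p·q))² ≤ (2/(p+q))·(√p - √q)², where in the degenerate cases p·q = 0 or p + q = 0 both sides are interpreted via the convention that division by zero yields zero. -/
lemma aux_0 (p q : ℝ) (hp : 0 < p) (hq : 0 < q) (h : p ≤ q) :
    (1 - min p q / Real.sqrt (p * q)) ^ 2 ≤
      (2 / (p + q)) * (Real.sqrt p - Real.sqrt q) ^ 2 := by
  have hsp : 0 < Real.sqrt p := Real.sqrt_pos.mpr hp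
  have hsq : 0 < Real.sqrt q := Real.sqrt_pos.mpr hq
  have hp2 : Real.sqrt p * Real.sqrt p = p := Real.mul_self_sqrt hp.le
  have hq2 : Real.sqrt q * Real.sqrt q = q := Real.mul_self_sqrt hq.le
  rw [min_eq_left h, Real.sqrt_mul hp.le]
  have h1 : 1 - p / (Real.sqrt p * Real.sqrt q)
      = (Real.sqrt q - Real.sqrt p) / Real.sqrt q := by
    field_simp
    nlinarith [hp2]
  rw [h1, div_pow, Real.sq_sqrt hq.le]
  rw [div_le_iff₀ hq, div_mul_eq_mul_div, div_mul_eq_mul_div, le_div_iff₀ (by linarith : (0:ℝ) < p + q)]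
  nlinarith [sq_nonneg (Real.sqrt q - Real.sqrt p), hq.le, h]

theorem stmt_0 (p q : ℝ) (hp : 0 < p) (hq : 0 < q) :
    (1 - min p q / Real.sqrt (p * q)) ^ 2 ≤
      (2 / (p + q)) * (Real.sqrt p - Real.sqrt q) ^ 2 := by
  rcases le_total p q with h | h
  · exact aux_0 p q hp hq h
  · have := aux_0 q p hq hp h
    have e : (Real.sqrt q - Real.sqrt p) ^ 2 = (Real.sqrt p - Real.sqrt q) ^ 2 := by ring
    rw [e] at this
    rwa [min_comm q p, mul_comm q p, add_comm q p] at this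
end

section
/- Let h be a positive definite n×n complex matrix and let x be any n×n complex matrix. Then Tr(h·x*·x) ≤ ‖h^{-1/2}‖·‖h^{1/2}‖·Tr(h^{1/4}·x*·h^{1/2}·x·h^{1/4}), where ‖·‖ denotes the operator norm. -/
/-!
Put `s = h^{1/2}` and `N = h^{1/4} x h^{1/4}`. Cyclicity of the trace turns the left side into
`Tr(s⁻¹ N s Nᴴ)` and the trace on the right into `Tr(Nᴴ N)`. For Hermitian `A` and positive
semidefinite `B` we have `Tr(A B) ≤ ‖A‖ Tr B`, since `‖A‖ - A ≥ 0` and the trace of a product of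
positive semidefinite matrices is nonnegative. Applied first to `s⁻¹` against `N s Nᴴ`, then to `s`
against `Nᴴ N`, this gives the bound.
-/

open scoped Matrix ComplexOrder Matrix.Norms.L2Operator

/-- The positive semidefinite square root of a positive semidefinite matrix
(the definition of `Matrix.PosSemidef.sqrt` from Mathlib of December 2024, since removed). -/
noncomputable def Matrix.PosSemidef.sqrt {n 𝕜 : Type*} [Fintype n] [RCLike 𝕜] [DecidableEq n]
    {A : Matrix n n 𝕜} (hA : Matrix.PosSemidef A) : Matrix n n 𝕜 :=
  hA.1.eigenvectorUnitary.1 * Matrix.diagonal ((↑) ∘ (√·) ∘ hA.1.eigenvalues) *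
  (star hA.1.eigenvectorUnitary : Matrix n n 𝕜)

theorem Matrix.PosSemidef.posSemidef_sqrt {n 𝕜 : Type*} [Fintype n] [RCLike 𝕜] [DecidableEq n]
    {A : Matrix n n 𝕜} (hA : Matrix.PosSemidef A) : Matrix.PosSemidef hA.sqrt := by
  unfold Matrix.PosSemidef.sqrt
  refine Matrix.PosSemidef.mul_mul_conjTranspose_same ?_ _
  refine Matrix.posSemidef_diagonal_iff.mpr fun i => ?_
  rw [Function.comp_apply, RCLike.nonneg_iff]
  constructor
  · simp only [Function.comp_apply, RCLike.ofReal_re]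
    exact Real.sqrt_nonneg _
  · simp only [Function.comp_apply, RCLike.ofReal_im]

open scoped MatrixOrder

namespace Matrix

variable {n 𝕜 : Type*} [Fintype n] [DecidableEq n] [RCLike 𝕜]

theorem PosSemidef.sqrt_mul_self {A : Matrix n n 𝕜} (hA : A.PosSemidef) :
    hA.sqrt * hA.sqrt = A := by
  unfold PosSemidef.sqrt
  conv_rhs => rw [hA.1.spectral_theorem, Unitary.conjStarAlgAut_apply]
  have hU : (star hA.1.eigenvectorUnitary : Matrix n n 𝕜) * hA.1.eigenvectorUnitary.1 = 1 :=
    Unitary.coe_star_mul_self _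
  simp only [Matrix.mul_assoc]
  rw [← Matrix.mul_assoc (star hA.1.eigenvectorUnitary : Matrix n n 𝕜), hU, Matrix.one_mul,
    ← Matrix.mul_assoc (diagonal _), diagonal_mul_diagonal]
  congr 3
  funext i
  simp only [Function.comp_apply]
  rw [← RCLike.ofReal_mul, Real.mul_self_sqrt (hA.eigenvalues_nonneg i)]

theorem PosSemidef.trace_mul_nonneg {A B : Matrix n n 𝕜} (hA : A.PosSemidef) (hB : B.PosSemidef) :
    0 ≤ (A * B).trace := by
  have hsA : hA.sqrtᴴ = hA.sqrt := hA.posSemidef_sqrt.isHermitian.eq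
  have := (hB.conjTranspose_mul_mul_same hA.sqrt).trace_nonneg
  rwa [hsA, Matrix.mul_assoc, trace_mul_comm, Matrix.mul_assoc, hA.sqrt_mul_self, trace_mul_comm]
    at this

theorem IsHermitian.trace_mul_le_norm_mul_trace {A B : Matrix n n ℂ} (hA : A.IsHermitian)
    (hB : B.PosSemidef) : (A * B).trace ≤ ‖A‖ * B.trace := by
  have hle : (algebraMap ℝ _ ‖A‖ - A).PosSemidef :=
    IsSelfAdjoint.le_algebraMap_norm_self (a := A) hA
  have := hle.trace_mul_nonneg hB
  rwa [sub_mul, trace_sub, Algebra.algebraMap_eq_smul_one, smul_mul_assoc, Matrix.one_mul,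
    trace_smul, Complex.real_smul, sub_nonneg] at this

theorem mul_inv_mul_self_mul_eq_one {q : Matrix n n 𝕜} (hq : IsUnit q.det) :
    q * (q * q)⁻¹ * q = 1 := by
  rw [mul_inv_rev, Matrix.mul_assoc, Matrix.mul_assoc, nonsing_inv_mul q hq, Matrix.mul_one,
    mul_nonsing_inv q hq]

theorem trace_mul_self_mul_conjTranspose_mul_le {q s : Matrix n n ℂ} (hq : q.IsHermitian)
    (hq_unit : IsUnit q.det) (hqq : q * q = s) (x : Matrix n n ℂ) :
    (s * s * xᴴ * x).trace ≤ ((‖s⁻¹‖ * ‖s‖ : ℝ) : ℂ) * (q * xᴴ * s * x * q).trace := by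
  have hs : s.PosSemidef := by
    simpa [hq.eq, hqq] using posSemidef_conjTranspose_mul_self q
  set N := q * x * q
  have hN_star : Nᴴ = q * xᴴ * q := by simp [N, conjTranspose_mul, hq.eq, Matrix.mul_assoc]
  have lhs_eq : (s * s * xᴴ * x).trace = (s⁻¹ * (N * s * Nᴴ)).trace := calc
    (s * s * xᴴ * x).trace = (q * s⁻¹ * q * (x * (q * s * q) * xᴴ)).trace := by
      rw [← hqq, mul_inv_mul_self_mul_eq_one hq_unit, Matrix.one_mul, trace_mul_cycle]
      simp only [Matrix.mul_assoc]
    _ = (s⁻¹ * (N * s * Nᴴ)).trace := by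
      rw [hN_star]
      simp only [N, Matrix.mul_assoc]
      rw [trace_mul_comm q]
      simp only [Matrix.mul_assoc]
  have rhs_eq : (q * xᴴ * s * x * q).trace = (Nᴴ * N).trace := by
    rw [hN_star, ← hqq]; simp only [N, Matrix.mul_assoc]
  calc (s * s * xᴴ * x).trace = (s⁻¹ * (N * s * Nᴴ)).trace := lhs_eq
    _ ≤ ‖s⁻¹‖ * (N * s * Nᴴ).trace :=
        hs.inv.isHermitian.trace_mul_le_norm_mul_trace (hs.mul_mul_conjTranspose_same N)
    _ = ‖s⁻¹‖ * (s * (Nᴴ * N)).trace := by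
        rw [Matrix.mul_assoc, trace_mul_comm, Matrix.mul_assoc]
    _ ≤ ‖s⁻¹‖ * (‖s‖ * (Nᴴ * N).trace) := by
        gcongr
        exact hs.isHermitian.trace_mul_le_norm_mul_trace (posSemidef_conjTranspose_mul_self N)
    _ = _ := by rw [rhs_eq, Complex.ofReal_mul, mul_assoc]

end Matrix

open Matrix

theorem stmt_6 (n : ℕ) (h : Matrix (Fin n) (Fin n) ℂ) (hd : h.PosDef)
    (x : Matrix (Fin n) (Fin n) ℂ) :
    (h * xᴴ * x).trace ≤
      ((‖(hd.posSemidef.sqrt)⁻¹‖ * ‖hd.posSemidef.sqrt‖ : ℝ) : ℂ) *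
        (hd.posSemidef.posSemidef_sqrt.sqrt * xᴴ * hd.posSemidef.sqrt * x *
          hd.posSemidef.posSemidef_sqrt.sqrt).trace := by
  have hs := hd.posSemidef.posSemidef_sqrt
  have hqq := hs.sqrt_mul_self
  have hq_unit : IsUnit hs.sqrt.det := by
    have := hd.det_pos.ne'
    rw [← hd.posSemidef.sqrt_mul_self, ← hqq] at this
    simpa [det_mul] using this
  conv_lhs => rw [← hd.posSemidef.sqrt_mul_self]
  exact trace_mul_self_mul_conjTranspose_mul_le hs.posSemidef_sqrt.isHermitian hq_unit hqq x
end

section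
/- Let p₁,…,p_m be positive integers, q = Σᵢ pᵢ, and λᵢ = m·pᵢ/q. Let h be the diagonal matrix with entries λᵢ and φ(x) = tr_m(h·x), ‖x‖_φ^♯ = φ((x*x+xx*)/2)^{1/2}. Define Θ: M_m(ℂ) → M_m(ℂ) entrywise by Θ(x)_{ij} = (min(pᵢ,pⱼ)/√(pᵢ·pⱼ))·x_{ij}. Then for every x ∈ M_m(ℂ): ‖Θ(x) − x‖_φ^♯ ≤ ‖h^{1/2}·x − x·h^{1/2}‖₂, where ‖a‖₂² = tr_m(a*a). -/
open scoped Matrix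

lemma key_le {a b : ℝ} (ha : 0 < a) (hab : a ≤ b) :
    (a + b) * (min a b / Real.sqrt (a * b) - 1) ^ 2 ≤ 2 * (Real.sqrt a - Real.sqrt b) ^ 2 := by
  have hb : 0 < b := lt_of_lt_of_le ha hab
  have hsa : 0 < Real.sqrt a := Real.sqrt_pos.2 ha
  have hsb : 0 < Real.sqrt b := Real.sqrt_pos.2 hb
  have hmin : min a b = a := min_eq_left hab
  have hsab : Real.sqrt (a * b) = Real.sqrt a * Real.sqrt b := Real.sqrt_mul ha.le b
  have ha2 : Real.sqrt a * Real.sqrt a = a := Real.mul_self_sqrt ha.le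
  have hb2 : Real.sqrt b * Real.sqrt b = b := Real.mul_self_sqrt hb.le
  have hrw : a / Real.sqrt (a * b) - 1 = (Real.sqrt a - Real.sqrt b) / Real.sqrt b := by
    rw [hsab]
    field_simp
    nlinarith
  rw [hmin, hrw, div_pow, Real.sq_sqrt hb.le, ← mul_div_assoc, div_le_iff₀ hb]
  nlinarith [sq_nonneg (Real.sqrt a - Real.sqrt b)]

lemma key {a b : ℝ} (ha : 0 < a) (hb : 0 < b) :
    (a + b) * (min a b / Real.sqrt (a * b) - 1) ^ 2 ≤ 2 * (Real.sqrt a - Real.sqrt b) ^ 2 := by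
  rcases le_total a b with hab | hab
  · exact key_le ha hab
  · have := key_le hb hab
    rw [min_comm, mul_comm b a] at this
    calc (a + b) * (min a b / Real.sqrt (a * b) - 1) ^ 2
        = (b + a) * (min a b / Real.sqrt (a * b) - 1) ^ 2 := by ring
      _ ≤ 2 * (Real.sqrt b - Real.sqrt a) ^ 2 := this
      _ = 2 * (Real.sqrt a - Real.sqrt b) ^ 2 := by ring

lemma sum_helper {m : ℕ} (lam : Fin m → ℝ) (f : Fin m → Fin m → ℝ) :
    ∑ i, lam i * ((∑ j, f j i) + ∑ j, f i j) = ∑ i, ∑ j, (lam i + lam j) * f i j := by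
  simp only [mul_add, Finset.mul_sum, add_mul, Finset.sum_add_distrib]
  rw [add_comm]
  congr 1
  · rw [Finset.sum_comm]

theorem stmt_12 (m : ℕ) (hm : 0 < m) (p : Fin m → ℕ) (hp : ∀ i, 0 < p i)
    (q : ℕ) (hq : q = ∑ i, p i)
    (lam : Fin m → ℝ) (hlam : ∀ i, lam i = (m : ℝ) * (p i) / q)
    (h : Matrix (Fin m) (Fin m) ℂ)
    (hh : h = Matrix.diagonal fun i => (lam i : ℂ))
    (s : Matrix (Fin m) (Fin m) ℂ)
    (hs : s = Matrix.diagonal fun i => ((Real.sqrt (lam i) : ℝ) : ℂ))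
    (Θ : Matrix (Fin m) (Fin m) ℂ → Matrix (Fin m) (Fin m) ℂ)
    (hΘ : ∀ x i j, Θ x i j =
      (((min (p i) (p j) : ℝ) / Real.sqrt ((p i : ℝ) * (p j : ℝ)) : ℝ) : ℂ) * x i j)
    (x : Matrix (Fin m) (Fin m) ℂ) :
    Real.sqrt (((h * ((Θ x - x)ᴴ * (Θ x - x) + (Θ x - x) * (Θ x - x)ᴴ)).trace
        / (2 * (m : ℂ))).re) ≤
      Real.sqrt ((((s * x - x * s)ᴴ * (s * x - x * s)).trace / (m : ℂ)).re) := by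
  have hne : Nonempty (Fin m) := ⟨⟨0, hm⟩⟩
  have hq0 : 0 < q := by
    subst hq
    exact Finset.sum_pos (fun i _ => hp i) Finset.univ_nonempty
  set c : Fin m → Fin m → ℝ := fun i j =>
    (min (p i) (p j) : ℝ) / Real.sqrt ((p i : ℝ) * (p j : ℝ)) with hc
  set d : Matrix (Fin m) (Fin m) ℂ := Θ x - x with hdd
  set e : Matrix (Fin m) (Fin m) ℂ := s * x - x * s with hee
  have hd : ∀ i j, d i j = ((c i j - 1 : ℝ) : ℂ) * x i j := by
    intro i j
    rw [hdd, Matrix.sub_apply, hΘ, Complex.ofReal_sub, Complex.ofReal_one, sub_mul, one_mul]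
  have he : ∀ i j, e i j = ((Real.sqrt (lam i) - Real.sqrt (lam j) : ℝ) : ℂ) * x i j := by
    intro i j
    rw [hee, Matrix.sub_apply, hs, Matrix.diagonal_mul, Matrix.mul_diagonal,
      Complex.ofReal_sub, sub_mul]
    ring
  set S₁ : ℝ := ∑ i, ∑ j, (lam i + lam j) * Complex.normSq (d i j) with hS1
  set S₂ : ℝ := ∑ i, ∑ j, (Real.sqrt (lam i) - Real.sqrt (lam j)) ^ 2 * Complex.normSq (x i j)
    with hS2
  -- trace 1
  have htr1 : (h * (dᴴ * d + d * dᴴ)).trace = (S₁ : ℂ) := by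
    subst hh
    have hdi : ∀ i, (Matrix.diagonal (fun i => (lam i : ℂ)) * (dᴴ * d + d * dᴴ)) i i
        = (lam i : ℂ) * ((dᴴ * d) i i + (d * dᴴ) i i) := by
      intro i
      rw [Matrix.diagonal_mul, Matrix.add_apply]
    have h1 : ∀ i : Fin m, (dᴴ * d) i i = ∑ j, ((Complex.normSq (d j i) : ℝ) : ℂ) := by
      intro i
      rw [Matrix.mul_apply]
      refine Finset.sum_congr rfl fun j _ => ?_
      rw [Matrix.conjTranspose_apply, Complex.normSq_eq_conj_mul_self]
      rfl
    have h2 : ∀ i : Fin m, (d * dᴴ) i i = ∑ j, ((Complex.normSq (d i j) : ℝ) : ℂ) := by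
      intro i
      rw [Matrix.mul_apply]
      refine Finset.sum_congr rfl fun j _ => ?_
      rw [Matrix.conjTranspose_apply, mul_comm, Complex.normSq_eq_conj_mul_self]
      rfl
    rw [Matrix.trace]
    simp only [Matrix.diag]
    rw [Finset.sum_congr rfl fun i _ => hdi i]
    simp only [h1, h2]
    calc ∑ i, (lam i : ℂ) * ((∑ j, ((Complex.normSq (d j i) : ℝ) : ℂ))
            + ∑ j, ((Complex.normSq (d i j) : ℝ) : ℂ))
        = ((∑ i, lam i * ((∑ j, Complex.normSq (d j i)) + ∑ j, Complex.normSq (d i j)) : ℝ) : ℂ) := by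
          push_cast; rfl
      _ = (S₁ : ℂ) := by rw [sum_helper]
  -- trace 2
  have htr2 : (eᴴ * e).trace = (S₂ : ℂ) := by
    have h1 : ∀ i : Fin m, (eᴴ * e) i i = ∑ j, ((Complex.normSq (e j i) : ℝ) : ℂ) := by
      intro i
      rw [Matrix.mul_apply]
      refine Finset.sum_congr rfl fun j _ => ?_
      rw [Matrix.conjTranspose_apply, Complex.normSq_eq_conj_mul_self]
      rfl
    rw [Matrix.trace]
    simp only [Matrix.diag, h1]
    calc ∑ i, ∑ j, ((Complex.normSq (e j i) : ℝ) : ℂ)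
        = ((∑ i, ∑ j, Complex.normSq (e j i) : ℝ) : ℂ) := by push_cast; rfl
      _ = ((∑ i, ∑ j, Complex.normSq (e i j) : ℝ) : ℂ) := by rw [Finset.sum_comm]
      _ = (S₂ : ℂ) := by
          rw [hS2]
          congr 1
          refine Finset.sum_congr rfl fun i _ => Finset.sum_congr rfl fun j _ => ?_
          rw [he, Complex.normSq_mul, Complex.normSq_ofReal, sq]
  -- key pointwise inequality
  have hkey : ∀ i j, (lam i + lam j) * (c i j - 1) ^ 2
      ≤ 2 * (Real.sqrt (lam i) - Real.sqrt (lam j)) ^ 2 := by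
    intro i j
    have ha : (0:ℝ) < p i := by exact_mod_cast hp i
    have hb : (0:ℝ) < p j := by exact_mod_cast hp j
    have ht : (0:ℝ) ≤ (m:ℝ)/q := by positivity
    have hst : Real.sqrt ((m:ℝ)/q) ^ 2 = (m:ℝ)/q := Real.sq_sqrt ht
    have hli : lam i = (m:ℝ)/q * (p i) := by rw [hlam]; ring
    have hlj : lam j = (m:ℝ)/q * (p j) := by rw [hlam]; ring
    have hsi : Real.sqrt (lam i) = Real.sqrt ((m:ℝ)/q) * Real.sqrt (p i) := by
      rw [hli, Real.sqrt_mul ht]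
    have hsj : Real.sqrt (lam j) = Real.sqrt ((m:ℝ)/q) * Real.sqrt (p j) := by
      rw [hlj, Real.sqrt_mul ht]
    have hk := key ha hb
    rw [hsi, hsj, hli, hlj]
    simp only [hc]
    nlinarith [mul_le_mul_of_nonneg_left hk ht, hst,
      sq_nonneg (Real.sqrt (p i : ℝ) - Real.sqrt (p j : ℝ))]
  have hS : S₁ ≤ 2 * S₂ := by
    rw [hS1, hS2, Finset.mul_sum]
    refine Finset.sum_le_sum fun i _ => ?_
    rw [Finset.mul_sum]
    refine Finset.sum_le_sum fun j _ => ?_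
    rw [hd, Complex.normSq_mul, Complex.normSq_ofReal]
    nlinarith [hkey i j, Complex.normSq_nonneg (x i j)]
  have hm' : (0:ℝ) < m := by exact_mod_cast hm
  have hre1 : (((S₁:ℂ)) / (2 * (m:ℂ))).re = S₁ / (2 * m) := by
    rw [show (2 * (m:ℂ)) = (((2 * m : ℝ)) : ℂ) by push_cast; ring, ← Complex.ofReal_div,
      Complex.ofReal_re]
  have hre2 : (((S₂:ℂ)) / ((m:ℂ))).re = S₂ / m := by
    rw [show ((m:ℂ)) = (((m : ℝ)) : ℂ) by push_cast; ring, ← Complex.ofReal_div,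
      Complex.ofReal_re]
  rw [htr1, htr2, hre1, hre2]
  apply Real.sqrt_le_sqrt
  rw [div_le_div_iff₀ (by positivity) hm']
  nlinarith
end
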